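/- arXiv:2006.08578 — 5 statements merged into one kernel-verified Lean document; each statement's English description precedes it below -/
import Mathlib

section
/- For any coprime integers a and b with b ≥ 1, and any integer 0 ≤ N < b, one has log P_N(a/b) + log P_{b-N-1}(a/b) = log b (the reflection principle). -/
/-!
Since `|sin (π (b - n) a / b)| = |sin (π n a / b)|`, the factors of `P_{b-1}(a/b)` are symmetric
under `n ↦ b - n`, so `P_N(a/b) · P_{b-N-1}(a/b) = P_{b-1}(a/b)`. With `ζ = e^{2πia/b}`, a primitive
`b`-th root of unity, `|2 sin (π n a / b)| = |1 - ζⁿ|`, and `∏_{n=1}^{b-1} (1 - ζⁿ) = b` is the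
value at `1` of `(Xᵇ - 1)/(X - 1)`.
-/

/-- The Sudler product `P_N(α) = ∏_{n=1}^N |2 sin(π n α)|`. -/
noncomputable def sudler (N : ℕ) (α : ℝ) : ℝ :=
  ∏ n ∈ Finset.Icc 1 N, |2 * Real.sin (Real.pi * n * α)|

open Real Finset

lemma abs_two_sin_int_mul_pi_sub (k : ℤ) (x : ℝ) :
    |2 * sin (k * π - x)| = |2 * sin x| := by
  simp [sin_int_mul_pi_sub, abs_mul]

lemma sudler_mul_sudler_sub {b M : ℕ} {α : ℝ} (hM : M < b) (k : ℤ) (hk : b * α = k) :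
    sudler M α * sudler (b - 1 - M) α = sudler (b - 1) α := by
  have hreflect : sudler (b - 1 - M) α = ∏ n ∈ Ioc M (b - 1), |2 * sin (π * n * α)| := by
    refine prod_nbij' (fun j => b - j) (fun j => b - j) ?_ ?_ ?_ ?_ fun j hj => ?_
    any_goals (simp only [mem_Icc, mem_Ioc]; intro j hj; omega)
    rw [Nat.cast_sub (by grind), ← abs_two_sin_int_mul_pi_sub k, ← hk]
    ring_nf
  have hIcc (n : ℕ) : Icc 1 n = Ioc 0 n := Icc_add_one_left_eq_Ioc 0 n
  rw [hreflect, sudler, sudler, hIcc, hIcc,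
    prod_Ioc_consecutive _ (Nat.zero_le M) (Nat.le_sub_one_of_lt hM)]

lemma sudler_sub_one_div_eq (a : ℤ) (b : ℕ) (hb : 0 < b) (hab : IsCoprime a b) :
    sudler (b - 1) (a / b) = b := by
  obtain ⟨m, rfl⟩ : ∃ m, b = m + 1 := Nat.exists_eq_add_one.mpr hb
  set ζ : ℂ := Complex.exp (2 * π * Complex.I / (m + 1 : ℕ)) ^ a
  have hζ : IsPrimitiveRoot ζ (m + 1) :=
    (Complex.isPrimitiveRoot_exp _ (by omega)).zpow_of_gcd_eq_one a
      (Int.isCoprime_iff_gcd_eq_one.mp hab)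
  have hfactor (n : ℕ) : ‖1 - ζ ^ n‖ = |2 * sin (π * n * (a / (m + 1 : ℕ)))| := by
    rw [norm_sub_rev, ← zpow_natCast, ← zpow_mul, ← Complex.exp_int_mul,
      show ((a * n : ℤ) : ℂ) * (2 * π * Complex.I / (m + 1 : ℕ))
        = Complex.I * (2 * π * n * (a / (m + 1 : ℕ)) : ℝ) by push_cast; ring,
      Complex.norm_exp_I_mul_ofReal_sub_one, Real.norm_eq_abs]
    ring_nf
  have hprod := congrArg (‖·‖) hζ.prod_one_sub_pow_eq_order
  simp only [norm_prod, hfactor] at hprod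
  rw [range_eq_Ico, prod_Ico_add' (fun n : ℕ => |2 * sin (π * n * (a / (m + 1 : ℕ)))|) 0 m 1,
    zero_add, Ico_add_one_right_eq_Icc] at hprod
  rw [Nat.add_sub_cancel, sudler, hprod]
  norm_cast

/-- The reflection principle: `log P_N(a/b) + log P_{b-N-1}(a/b) = log b`. -/
theorem sudler_reflection (a b N : ℤ) (hb : 1 ≤ b) (hab : IsCoprime a b)
    (hN0 : 0 ≤ N) (hNb : N < b) :
    Real.log (sudler N.toNat ((a : ℝ) / b)) +
      Real.log (sudler (b - N - 1).toNat ((a : ℝ) / b)) = Real.log b := by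
  lift b to ℕ using (by omega)
  lift N to ℕ using hN0
  have hb0 : (b : ℝ) ≠ 0 := by exact_mod_cast (show b ≠ 0 by omega)
  have hprod : sudler N (a / b) * sudler (b - 1 - N) (a / b) = b := by
    rw [sudler_mul_sudler_sub (by omega) a (mul_div_cancel₀ _ hb0),
      sudler_sub_one_div_eq a b (by omega) hab]
  rw [Int.cast_natCast, Int.toNat_natCast, show ((b : ℤ) - N - 1).toNat = b - 1 - N by omega,
    ← Real.log_mul (left_ne_zero_of_mul (hprod ▸ hb0)) (right_ne_zero_of_mul (hprod ▸ hb0)),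
    hprod]
end

section
/- For any coprime integers a and b with b ≥ 1, the average (1/b) ∑_{N=0}^{b-1} log P_N(a/b) equals (log b)/2. -/
open Finset Real Complex

/-! With `ζ = exp(2πi a/b)` a primitive `b`-th root of unity, `|2 sin(π n a/b)| = |1 - ζ^n|`, so
`P_{b-1}(a/b) = ∏_{0<n<b} |1 - ζ^n| = b`, the value at `1` of `(X^b - 1)/(X - 1)`. The factors are
invariant under `n ↦ b - n`, hence `P_N · P_{b-1-N} = P_{b-1} = b` for `N < b`, and pairing `N` with
`b - 1 - N` in the average gives `(log b)/2`. -/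

lemma norm_one_sub_exp_two_pi_mul_I_pow (α : ℝ) (n : ℕ) :
    ‖1 - exp (2 * π * I * α) ^ n‖ = |2 * Real.sin (π * n * α)| := by
  rw [← Complex.exp_nat_mul, norm_sub_rev]
  have h := norm_exp_I_mul_ofReal_sub_one (2 * π * n * α)
  rw [Real.norm_eq_abs, show 2 * π * n * α / 2 = π * n * α by ring] at h
  rw [← h]
  congr 3
  push_cast
  ring

lemma isPrimitiveRoot_exp_of_isCoprime {a : ℤ} {b : ℕ} (hb : b ≠ 0) (hab : IsCoprime a b) :
    IsPrimitiveRoot (exp (2 * π * I * ((a / b : ℝ) : ℂ))) b := by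
  have h := (Complex.isPrimitiveRoot_exp b hb).zpow_of_gcd_eq_one a
    (Int.isCoprime_iff_gcd_eq_one.mp hab)
  rwa [← Complex.exp_int_mul, show (a : ℂ) * (2 * π * I / b) = 2 * π * I * ((a / b : ℝ) : ℂ) by
    push_cast; ring] at h

lemma prod_range_succ_eq_prod_Icc_one {M : Type*} [CommMonoid M] (f : ℕ → M) (n : ℕ) :
    ∏ k ∈ range n, f (k + 1) = ∏ k ∈ Icc 1 n, f k := by
  rw [range_eq_Ico, prod_Ico_add' f 0 n 1, zero_add, Ico_add_one_right_eq_Icc]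

lemma sudler_pred_of_isCoprime {a : ℤ} {b : ℕ} (hb : b ≠ 0) (hab : IsCoprime a b) :
    sudler (b - 1) (a / b) = b := by
  obtain ⟨n, rfl⟩ := Nat.exists_eq_add_one_of_ne_zero hb
  have h := congrArg (‖·‖) (isPrimitiveRoot_exp_of_isCoprime hb hab).prod_one_sub_pow_eq_order
  simp only [norm_prod, norm_one_sub_exp_two_pi_mul_I_pow] at h
  rw [sudler, Nat.add_sub_cancel, ← prod_range_succ_eq_prod_Icc_one]
  exact_mod_cast h

lemma abs_two_sin_pi_mul_div_reflect (a : ℤ) {b n : ℕ} (hb : b ≠ 0) (hn : n ≤ b) :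
    |2 * Real.sin (π * (b - n : ℕ) * (a / b))| = |2 * Real.sin (π * n * (a / b))| := by
  have : π * (b - n : ℕ) * ((a : ℝ) / b) = a * π - π * n * ((a : ℝ) / b) := by
    push_cast [hn]
    field_simp
  rw [this, Real.sin_int_mul_pi_sub]
  simp [abs_mul]

lemma prod_Icc_one_mul_prod_Icc_one_of_reflect {M : Type*} [CommMonoid M] (g : ℕ → M) (N K : ℕ)
    (hg : ∀ n ≤ N + K + 1, g (N + K + 1 - n) = g n) :
    (∏ n ∈ Icc 1 N, g n) * ∏ n ∈ Icc 1 K, g n = ∏ n ∈ Icc 1 (N + K), g n := by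
  have hIoc (m : ℕ) : Icc 1 m = Ioc 0 m := Icc_add_one_left_eq_Ioc 0 m
  rw [hIoc, hIoc, hIoc, ← prod_Ioc_consecutive g (Nat.zero_le N) (Nat.le_add_right N K)]
  congr 1
  refine prod_nbij' (fun n ↦ N + K + 1 - n) (fun n ↦ N + K + 1 - n) ?_ ?_ ?_ ?_
    fun n hn ↦ (hg n ?_).symm <;> grind

lemma sudler_mul_sudler_of_add_eq (a : ℤ) {b N K : ℕ} (h : N + K + 1 = b) :
    sudler N (a / b) * sudler K (a / b) = sudler (N + K) (a / b) := by
  subst h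
  exact prod_Icc_one_mul_prod_Icc_one_of_reflect _ N K fun n hn ↦
    abs_two_sin_pi_mul_div_reflect a (Nat.succ_ne_zero _) hn

/-- The average of `log P_N(a/b)` over `0 ≤ N < b` equals `(log b)/2`. -/
theorem sudler_log_average (a b : ℤ) (hb : 1 ≤ b) (hab : IsCoprime a b) :
    (1 / (b : ℝ)) * ∑ N ∈ Finset.range b.toNat, Real.log (sudler N ((a : ℝ) / b)) =
      Real.log b / 2 := by
  lift b to ℕ using (by omega)
  simp only [Int.toNat_natCast, Int.cast_natCast] at hab ⊢
  have hb0 : b ≠ 0 := by omega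
  have hpair : ∀ N ∈ range b,
      Real.log (sudler N (a / b)) + Real.log (sudler (b - 1 - N) (a / b)) = Real.log b := by
    intro N hN
    have hprod : sudler N (a / b) * sudler (b - 1 - N) (a / b) = b := by
      rw [sudler_mul_sudler_of_add_eq a (by grind), show N + (b - 1 - N) = b - 1 by grind]
      exact sudler_pred_of_isCoprime hb0 hab
    obtain ⟨hN0, hK0⟩ := mul_ne_zero_iff.mp (hprod ▸ Nat.cast_ne_zero.mpr hb0)
    rw [← Real.log_mul hN0 hK0, hprod]
  have htwice : 2 * ∑ N ∈ range b, Real.log (sudler N (a / b)) = b * Real.log b := by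
    rw [two_mul]
    nth_rewrite 2 [← sum_range_reflect]
    rw [← sum_add_distrib, sum_congr rfl hpair, sum_const, card_range, nsmul_eq_mul]
  field_simp
  linarith
end

section
/- For any coprime integers a and b with b ≥ 1, one has log max_{0 ≤ N < b} P_N(a/b) + log min_{0 ≤ N < b} P_N(a/b) = log b. -/
open Finset Real Complex

theorem Finset.sup'_mul_inf'_eq_of_mul_eq {ι R : Type*} [CommSemiring R] [LinearOrder R]
    [IsOrderedRing R] {s : Finset ι} (hs : s.Nonempty) {f : ι → R} {σ : ι → ι} {c : R}
    (hσ : ∀ i ∈ s, σ i ∈ s) (hf : ∀ i ∈ s, 0 ≤ f i) (h : ∀ i ∈ s, f i * f (σ i) = c) :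
    s.sup' hs f * s.inf' hs f = c := by
  obtain ⟨i, hi, hmax⟩ := exists_mem_eq_sup' hs f
  obtain ⟨j, hj, hmin⟩ := exists_mem_eq_inf' hs f
  apply le_antisymm
  · calc s.sup' hs f * s.inf' hs f ≤ f i * f (σ i) := by
          rw [hmax]; exact mul_le_mul_of_nonneg_left (inf'_le f (hσ i hi)) (hf i hi)
      _ = c := h i hi
  · calc c = f (σ j) * f j := by rw [← h j hj, mul_comm]
      _ ≤ s.sup' hs f * s.inf' hs f := by
          rw [hmin]; exact mul_le_mul_of_nonneg_right (le_sup' f (hσ j hj)) (hf j hj)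

lemma isPrimitiveRoot_exp_int_div (a : ℤ) {q : ℕ} (hq : q ≠ 0) (h : IsCoprime a q) :
    IsPrimitiveRoot (exp (2 * π * I * (a / q))) q := by
  rw [show 2 * π * I * (a / q) = a * (2 * π * I / q) by ring, exp_int_mul]
  exact (isPrimitiveRoot_exp q hq).zpow_of_gcd_eq_one a (Int.isCoprime_iff_gcd_eq_one.1 h)

lemma sudler_eq_norm_prod_one_sub_pow (N : ℕ) (α : ℝ) :
    sudler N α = ‖∏ k ∈ range N, (1 - exp (2 * π * I * α) ^ (k + 1))‖ := by
  rw [norm_prod, sudler, range_eq_Ico,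
    prod_Ico_add' (fun k => ‖1 - exp (2 * π * I * α) ^ k‖)]
  refine prod_congr (by ext; simp) fun n _ => ?_
  rw [← Complex.exp_nat_mul, norm_sub_rev, ← Real.norm_eq_abs,
    show (n : ℂ) * (2 * π * I * α) = I * ((2 * π * n * α : ℝ) : ℂ) by push_cast; ring,
    norm_exp_I_mul_ofReal_sub_one]
  ring_nf

lemma sudler_int_div_eq_norm_prod (a : ℤ) (q N : ℕ) :
    sudler N (a / q) = ‖∏ k ∈ range N, (1 - exp (2 * π * I * (a / q)) ^ (k + 1))‖ := by
  rw [sudler_eq_norm_prod_one_sub_pow]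
  push_cast
  rfl

lemma sudler_pred_eq (a : ℤ) {q : ℕ} (hq : q ≠ 0) (h : IsCoprime a q) :
    sudler (q - 1) (a / q) = q := by
  obtain ⟨n, rfl⟩ := Nat.exists_eq_add_one_of_ne_zero hq
  rw [sudler_int_div_eq_norm_prod, Nat.add_sub_cancel,
    (isPrimitiveRoot_exp_int_div a hq h).prod_one_sub_pow_eq_order]
  norm_cast

lemma sudler_pos (a : ℤ) {q N : ℕ} (h : IsCoprime a q) (hN : N < q) :
    0 < sudler N (a / q) := by
  have hζ := isPrimitiveRoot_exp_int_div a (by omega) h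
  rw [sudler_int_div_eq_norm_prod, norm_pos_iff, prod_ne_zero_iff]
  intro k hk
  rw [mem_range] at hk
  exact sub_ne_zero.2 (hζ.pow_ne_one_of_pos_of_lt k.succ_ne_zero (by omega)).symm

lemma abs_two_sin_pi_mul_sub_mul_div (a : ℤ) {q : ℕ} (hq : q ≠ 0) (x : ℝ) :
    |2 * Real.sin (π * (q - x) * (a / q))| = |2 * Real.sin (π * x * (a / q))| := by
  rw [show π * (q - x) * (a / q) = a * π - π * x * (a / q) by field_simp, Real.sin_int_mul_pi_sub]
  simp [abs_mul]

lemma sudler_mul_sudler_sub_s3 (a : ℤ) {q N : ℕ} (hN : N < q) :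
    sudler N (a / q) * sudler (q - 1 - N) (a / q) = sudler (q - 1) (a / q) := by
  have hIcc (n : ℕ) : Icc 1 n = Ioc 0 n := by ext; simp; omega
  simp only [sudler, hIcc]
  rw [← prod_Ioc_consecutive _ N.zero_le (Nat.le_sub_one_of_lt hN)]
  congr 1
  refine prod_nbij' (q - ·) (q - ·) ?_ ?_ ?_ ?_ fun m hm => ?_
  any_goals intro m hm; simp only [mem_Ioc] at hm ⊢; omega
  rw [mem_Ioc] at hm
  rw [Nat.cast_sub (by omega), abs_two_sin_pi_mul_sub_mul_div a (by omega)]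

theorem sudler_log_max_add_log_min_general (a b : ℤ) (hab : IsCoprime a b)
    (hne : (Finset.range b.toNat).Nonempty) :
    Real.log ((Finset.range b.toNat).sup' hne (fun N => sudler N ((a : ℝ) / b))) +
      Real.log ((Finset.range b.toNat).inf' hne (fun N => sudler N ((a : ℝ) / b))) =
      Real.log b := by
  have hb : (b.toNat : ℤ) = b :=
    Int.toNat_of_nonneg (Int.lt_toNat.1 ((card_pos.2 hne).trans_eq (card_range _))).le
  rw [← hb] at hab
  rw [show (b : ℝ) = b.toNat by exact_mod_cast hb.symm]
  generalize b.toNat = q at hne hab ⊢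
  have hpos : ∀ N ∈ range q, 0 < sudler N (a / q) :=
    fun N hN => sudler_pos a hab (mem_range.1 hN)
  have hmax_pos := (hpos _ hne.choose_spec).trans_le
    (le_sup' (fun N => sudler N (a / q)) hne.choose_spec)
  have hmin_pos := (lt_inf'_iff hne).2 hpos
  rw [← Real.log_mul hmax_pos.ne' hmin_pos.ne',
    sup'_mul_inf'_eq_of_mul_eq hne (σ := fun N => q - 1 - N)
      (fun N hN => by simp only [mem_range] at hN ⊢; omega) (fun N hN => (hpos N hN).le)
      (fun N hN => sudler_mul_sudler_sub_s3 a (mem_range.1 hN)),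
    sudler_pred_eq a (by simpa using hne.ne_empty) hab]

/-- `log max_{0 ≤ N < b} P_N(a/b) + log min_{0 ≤ N < b} P_N(a/b) = log b`. -/
theorem sudler_log_max_add_log_min (a b : ℤ) (hb : 1 ≤ b) (hab : IsCoprime a b)
    (hne : (Finset.range b.toNat).Nonempty) :
    Real.log ((Finset.range b.toNat).sup' hne (fun N => sudler N ((a : ℝ) / b))) +
      Real.log ((Finset.range b.toNat).inf' hne (fun N => sudler N ((a : ℝ) / b))) =
      Real.log b :=
  sudler_log_max_add_log_min_general a b hab hne
end

section
/- Let α be irrational with convergents p_k/q_k and δ_ℓ = (-1)^ℓ(q_ℓ α - p_ℓ). For any integer N ≥ 0 with Ostrowski expansion N = ∑_{k≥0} b_k q_k (where 0 ≤ b_0 ≤ a_1 - 1, 0 ≤ b_k ≤ a_{k+1}, and b_{k-1} = 0 whenever b_k = a_{k+1}), the quantity ε_k(N) := q_k ∑_{ℓ=k+1}^∞ (-1)^{k+ℓ} b_ℓ δ_ℓ satisfies -q_k(δ_k - δ_{k+1}) ≤ ε_k(N) ≤ q_k δ_{k+1} whenever b_k > 0. -/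
/-!
Write `T_j = ∑_{j < ℓ ≤ K} (-1)^(j+ℓ) b_ℓ δ_ℓ`, so that `ε_k(N) = q_k T_k`. Peeling off the first
term gives `T_j = -b_{j+1} δ_{j+1} - T_{j+1}`, and a downward induction using
`δ_j = a_{j+2} δ_{j+1} + δ_{j+2}` and `b_{j+1} ≤ a_{j+2}` yields `-δ_j ≤ T_j ≤ δ_{j+1}`.
If `b_k > 0`, the digit rule forbids `b_{k+1} = a_{k+2}`, and the sharper bound
`b_{k+1} ≤ a_{k+2} - 1` improves the lower estimate for `T_k` to `δ_{k+1} - δ_k`.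
-/

namespace Ostrowski

variable (b : ℕ → ℕ) (δ : ℕ → ℝ) (K : ℕ)

def tail (j : ℕ) : ℝ := ∑ ℓ ∈ Finset.Ioc j K, (-1 : ℝ) ^ (j + ℓ) * b ℓ * δ ℓ

variable {b δ K}

theorem tail_eq_zero_of_le {j : ℕ} (h : K ≤ j) : tail b δ K j = 0 := by
  simp [tail, Finset.Ioc_eq_empty_of_le h]

theorem tail_eq_of_lt {j : ℕ} (h : j < K) :
    tail b δ K j = -(b (j + 1) * δ (j + 1)) - tail b δ K (j + 1) := by
  rw [tail, ← Finset.insert_Ioc_succ_left_eq_Ioc h, Order.succ_eq_add_one,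
    Finset.sum_insert Finset.left_notMem_Ioc, tail, sub_eq_add_neg, ← Finset.sum_neg_distrib]
  congr 1
  · rw [Odd.neg_one_pow ⟨j, by ring⟩]; ring
  · refine Finset.sum_congr rfl fun ℓ _ => ?_
    rw [add_right_comm, pow_succ]; ring

variable {a : ℕ → ℕ}

theorem tail_mem_Icc (hδ : ∀ j, 0 ≤ δ j) (hrec : ∀ j, δ j = a (j + 2) * δ (j + 1) + δ (j + 2))
    (hb : ∀ j, b (j + 1) ≤ a (j + 2)) (j : ℕ) :
    -δ j ≤ tail b δ K j ∧ tail b δ K j ≤ δ (j + 1) := by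
  induction hn : K - j generalizing j with
  | zero =>
    rw [tail_eq_zero_of_le (by omega)]
    exact ⟨neg_nonpos.mpr (hδ j), hδ (j + 1)⟩
  | succ n ih =>
    obtain ⟨hlow, hup⟩ := ih (j + 1) (by omega)
    have hbδ : (b (j + 1) : ℝ) * δ (j + 1) ≤ a (j + 2) * δ (j + 1) :=
      mul_le_mul_of_nonneg_right (by exact_mod_cast hb j) (hδ (j + 1))
    rw [tail_eq_of_lt (by omega)]
    constructor
    · linarith [hrec j]
    · linarith [mul_nonneg (Nat.cast_nonneg (b (j + 1))) (hδ (j + 1))]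

theorem sub_le_tail_of_lt (hδ : ∀ j, 0 ≤ δ j)
    (hrec : ∀ j, δ j = a (j + 2) * δ (j + 1) + δ (j + 2)) (hb : ∀ j, b (j + 1) ≤ a (j + 2))
    {j : ℕ} (hj : j < K) (hbj : b (j + 1) < a (j + 2)) :
    δ (j + 1) - δ j ≤ tail b δ K j := by
  have hbj' : (b (j + 1) + 1 : ℝ) ≤ a (j + 2) := by exact_mod_cast hbj
  have hbδ := mul_le_mul_of_nonneg_right hbj' (hδ (j + 1))
  have hup := (tail_mem_Icc (K := K) hδ hrec hb (j + 1)).2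
  rw [tail_eq_of_lt hj]
  linarith [hrec j]

end Ostrowski

open Ostrowski in
theorem ostrowski_tail_bounds_general (a q : ℕ → ℕ) (δ : ℕ → ℝ) (K : ℕ)
    (hδpos : ∀ k, 0 < δ k)
    (hδrec : ∀ ℓ, 2 ≤ ℓ → δ ℓ = -(a ℓ : ℝ) * δ (ℓ - 1) + δ (ℓ - 2))
    (b : ℕ → ℕ)
    (hbk : ∀ k, 1 ≤ k → b k ≤ a (k + 1))
    (hrule : ∀ k, 1 ≤ k → b k = a (k + 1) → b (k - 1) = 0)
    (hsupp : ∀ k, K ≤ k → b k = 0)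
    (k : ℕ) (hbkpos : 0 < b k) :
    -(q k : ℝ) * (δ k - δ (k + 1)) ≤
        (q k : ℝ) * ∑ ℓ ∈ Finset.Ioc k K, (-1 : ℝ) ^ (k + ℓ) * (b ℓ : ℝ) * δ ℓ ∧
    (q k : ℝ) * ∑ ℓ ∈ Finset.Ioc k K, (-1 : ℝ) ^ (k + ℓ) * (b ℓ : ℝ) * δ ℓ ≤
        (q k : ℝ) * δ (k + 1) := by
  have hδ : ∀ j, 0 ≤ δ j := fun j => (hδpos j).le
  have hrec : ∀ j, δ j = a (j + 2) * δ (j + 1) + δ (j + 2) := fun j => by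
    have h := hδrec (j + 2) (by omega)
    rw [show j + 2 - 1 = j + 1 by omega, Nat.add_sub_cancel] at h
    linarith
  have hb : ∀ j, b (j + 1) ≤ a (j + 2) := fun j => hbk (j + 1) (by omega)
  have hkK : k < K := not_le.mp fun h => hbkpos.ne' (hsupp k h)
  have hbk1 : b (k + 1) < a (k + 2) :=
    (hb k).lt_of_ne fun h => hbkpos.ne' (hrule (k + 1) (by omega) h)
  have hqk : (0 : ℝ) ≤ q k := Nat.cast_nonneg _
  constructor
  · have := mul_le_mul_of_nonneg_left (sub_le_tail_of_lt hδ hrec hb hkK hbk1) hqk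
    unfold tail at this
    linarith
  · exact mul_le_mul_of_nonneg_left (tail_mem_Icc hδ hrec hb k).2 hqk

/-- Bounds `-q_k(δ_k - δ_{k+1}) ≤ ε_k(N) ≤ q_k δ_{k+1}` on the Ostrowski tail
    `ε_k(N) = q_k ∑_{ℓ>k} (-1)^{k+ℓ} b_ℓ δ_ℓ`, valid whenever the digit `b_k` is positive. -/
theorem ostrowski_tail_bounds (a q : ℕ → ℕ) (δ : ℕ → ℝ) (K : ℕ)
    (ha : ∀ k, 1 ≤ k → 1 ≤ a k) (hq : ∀ k, 0 < q k)
    (hδpos : ∀ k, 0 < δ k)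
    (hδrec : ∀ ℓ, 2 ≤ ℓ → δ ℓ = -(a ℓ : ℝ) * δ (ℓ - 1) + δ (ℓ - 2))
    (b : ℕ → ℕ)
    (hb0 : b 0 ≤ a 1 - 1)
    (hbk : ∀ k, 1 ≤ k → b k ≤ a (k + 1))
    (hrule : ∀ k, 1 ≤ k → b k = a (k + 1) → b (k - 1) = 0)
    (hsupp : ∀ k, K ≤ k → b k = 0)
    (k : ℕ) (hbkpos : 0 < b k) :
    -(q k : ℝ) * (δ k - δ (k + 1)) ≤
        (q k : ℝ) * ∑ ℓ ∈ Finset.Ioc k K, (-1 : ℝ) ^ (k + ℓ) * (b ℓ : ℝ) * δ ℓ ∧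
    (q k : ℝ) * ∑ ℓ ∈ Finset.Ioc k K, (-1 : ℝ) ^ (k + ℓ) * (b ℓ : ℝ) * δ ℓ ≤
        (q k : ℝ) * δ (k + 1) :=
  ostrowski_tail_bounds_general a q δ K hδpos hδrec b hbk hrule hsupp k hbkpos
end

section
/- Let α be irrational and let N ≥ 0 have Ostrowski expansion N = ∑_{k=0}^∞ b_k q_k with respect to the convergent denominators q_k of α. Then P_N(α) = ∏_{k=0}^∞ ∏_{b=0}^{b_k - 1} P_{q_k}(α, b q_k δ_k + ε_k(N)), where P_{q}(α, x) := ∏_{n=1}^{q} |2 sin(π(n α + (-1)^k x / q_k))| is the perturbed Sudler product and ε_k(N) := q_k ∑_{ℓ=k+1}^∞ (-1)^{k+ℓ} b_ℓ δ_ℓ. -/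
/-- The perturbed Sudler product
    `P_{q_k}(α, x) = ∏_{n=1}^{q_k} |2 sin(π(n α + (-1)^k x / q_k))|`. -/
noncomputable def sudlerPert (qk : ℕ) (k : ℕ) (α x : ℝ) : ℝ :=
  ∏ n ∈ Finset.Icc 1 qk, |2 * Real.sin (Real.pi * ((n : ℝ) * α + (-1 : ℝ) ^ k * x / qk))|

open Finset Real

namespace Finset

variable {M : Type*} [CommMonoid M]

theorem prod_Ioc_add_eq_prod_Icc (f : ℕ → M) (c q : ℕ) :
    ∏ m ∈ Ioc c (c + q), f m = ∏ n ∈ Icc 1 q, f (c + n) := by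
  rw [← Icc_add_one_left_eq_Ioc, ← map_add_left_Icc, prod_map]
  rfl

theorem prod_Ioc_add_mul_eq_prod_range_prod_Icc (f : ℕ → M) (c B q : ℕ) :
    ∏ m ∈ Ioc c (c + B * q), f m = ∏ j ∈ range B, ∏ n ∈ Icc 1 q, f (c + j * q + n) := by
  induction B with
  | zero => simp
  | succ B ih =>
    rw [show c + (B + 1) * q = c + B * q + q by ring,
      ← prod_Ioc_consecutive f (Nat.le_add_right _ _) (Nat.le_add_right _ _), ih,
      prod_Ioc_add_eq_prod_Icc, prod_range_succ]

theorem prod_range_prod_Ioc_of_antitone (f : ℕ → M) {T : ℕ → ℕ} (hT : Antitone T) (K : ℕ) :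
    ∏ k ∈ range K, ∏ m ∈ Ioc (T (k + 1)) (T k), f m = ∏ m ∈ Ioc (T K) (T 0), f m := by
  induction K with
  | zero => simp
  | succ K ih =>
    rw [prod_range_succ, ih, mul_comm, prod_Ioc_consecutive f (hT K.le_succ) (hT K.zero_le)]

theorem prod_Ioc_zero_sum_eq_prod_range_prod_Ioc (f : ℕ → M) (c : ℕ → ℕ) (K : ℕ) :
    ∏ m ∈ Ioc 0 (∑ k ∈ range K, c k), f m =
      ∏ k ∈ range K, ∏ m ∈ Ioc (∑ ℓ ∈ Ioo k K, c ℓ) (∑ ℓ ∈ Ioo k K, c ℓ + c k), f m := by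
  set T : ℕ → ℕ := fun k => ∑ ℓ ∈ Ico k K, c ℓ
  have hT : Antitone T := fun i j hij => sum_le_sum_of_subset (Ico_subset_Ico_left hij)
  have hT0 : T 0 = ∑ k ∈ range K, c k := by rw [range_eq_Ico]
  have hTK : T K = 0 := by simp [T]
  have htele := prod_range_prod_Ioc_of_antitone f hT K
  rw [hTK, hT0] at htele
  rw [← htele]
  refine prod_congr rfl fun k hk => ?_
  rw [show T k = T (k + 1) + c k by
      rw [add_comm]; exact sum_eq_sum_Ico_succ_bot (mem_range.1 hk) c]
  simp only [T, Ico_add_one_left_eq_Ioo]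

end Finset

theorem abs_sin_pi_mul_sub_intCast (x : ℝ) (M : ℤ) : |sin (π * (x - M))| = |sin (π * x)| := by
  rw [mul_sub, mul_comm π (M : ℝ), sin_sub_int_mul_pi, abs_mul, abs_zpow, abs_neg, abs_one,
    one_zpow, one_mul]

theorem neg_one_pow_mul_perturbation (α : ℝ) (p : ℕ → ℤ) (q b : ℕ → ℕ) (δ : ℕ → ℝ)
    (hδ : ∀ k, δ k = (-1 : ℝ) ^ k * ((q k : ℝ) * α - (p k : ℝ))) (k j : ℕ) (s : Finset ℕ) :
    (-1 : ℝ) ^ k * ((j : ℝ) * q k * δ k + q k * ∑ ℓ ∈ s, (-1 : ℝ) ^ (k + ℓ) * b ℓ * δ ℓ) =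
      q k * (((∑ ℓ ∈ s, b ℓ * q ℓ + j * q k : ℕ) : ℝ) * α -
        ((∑ ℓ ∈ s, b ℓ * p ℓ + j * p k : ℤ) : ℝ)) := by
  have hsign : ∀ ℓ, (-1 : ℝ) ^ k * ((-1) ^ (k + ℓ) * (-1) ^ ℓ) = 1 := fun ℓ => by
    rw [← pow_add, ← pow_add]; exact Even.neg_one_pow ⟨k + ℓ, by ring⟩
  have hδk : (-1 : ℝ) ^ k * δ k = q k * α - p k := by
    rw [hδ, ← mul_assoc, ← pow_add, Even.neg_one_pow ⟨k, rfl⟩, one_mul]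
  have hsum : (-1 : ℝ) ^ k * ∑ ℓ ∈ s, (-1 : ℝ) ^ (k + ℓ) * b ℓ * δ ℓ =
      ∑ ℓ ∈ s, (b ℓ : ℝ) * (q ℓ * α - p ℓ) := by
    rw [mul_sum]
    refine sum_congr rfl fun ℓ _ => ?_
    rw [hδ]
    linear_combination ((b ℓ : ℝ) * (q ℓ * α - p ℓ)) * hsign ℓ
  have hsplit : ∑ ℓ ∈ s, (b ℓ : ℝ) * (q ℓ * α - p ℓ) =
      (∑ ℓ ∈ s, (b ℓ : ℝ) * q ℓ) * α - ∑ ℓ ∈ s, (b ℓ : ℝ) * p ℓ := by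
    rw [sum_mul, ← sum_sub_distrib]
    exact sum_congr rfl fun _ _ => by ring
  push_cast
  linear_combination ((j : ℝ) * q k) * hδk + (q k : ℝ) * hsum + (q k : ℝ) * hsplit

theorem sudlerPert_eq_prod_Icc_add (qk k : ℕ) (α x : ℝ) (c : ℕ) (M : ℤ)
    (hx : (-1 : ℝ) ^ k * x = qk * (c * α - M)) :
    sudlerPert qk k α x = ∏ n ∈ Icc 1 qk, |2 * sin (π * ↑(c + n) * α)| := by
  refine prod_congr rfl fun n hn => ?_
  have hqk : (qk : ℝ) ≠ 0 := by
    have := mem_Icc.1 hn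
    exact Nat.cast_ne_zero.2 (by omega)
  have harg : (n : ℝ) * α + (-1) ^ k * x / qk = ((c + n : ℕ) : ℝ) * α - M := by
    rw [hx, mul_div_cancel_left₀ _ hqk]
    push_cast
    ring
  rw [harg, abs_mul, abs_mul, mul_assoc, abs_sin_pi_mul_sub_intCast]

theorem sudler_ostrowski_factorization_general (α : ℝ) (p : ℕ → ℤ) (q : ℕ → ℕ) (K : ℕ)
    (δ : ℕ → ℝ) (hδ : ∀ k, δ k = (-1 : ℝ) ^ k * ((q k : ℝ) * α - (p k : ℝ)))
    (b : ℕ → ℕ)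
    (N : ℕ) (hN : N = ∑ k ∈ Finset.range K, b k * q k) :
    sudler N α =
      ∏ k ∈ Finset.range K, ∏ j ∈ Finset.range (b k),
        sudlerPert (q k) k α
          ((j : ℝ) * (q k : ℝ) * δ k +
            (q k : ℝ) * ∑ ℓ ∈ Finset.Ioo k K, (-1 : ℝ) ^ (k + ℓ) * (b ℓ : ℝ) * δ ℓ) := by
  rw [sudler, show Icc 1 N = Ioc 0 N from Icc_add_one_left_eq_Ioc 0 N, hN,
    prod_Ioc_zero_sum_eq_prod_range_prod_Ioc]
  refine prod_congr rfl fun k _ => ?_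
  rw [prod_Ioc_add_mul_eq_prod_range_prod_Icc]
  refine prod_congr rfl fun j _ => ?_
  exact (sudlerPert_eq_prod_Icc_add _ _ _ _ _ _
    (neg_one_pow_mul_perturbation α p q b δ hδ k j _)).symm

/-- Factorization of the Sudler product along the Ostrowski expansion
    `N = ∑_k b_k q_k`:
    `P_N(α) = ∏_k ∏_{j=0}^{b_k-1} P_{q_k}(α, j q_k δ_k + ε_k(N))`, where
    `ε_k(N) = q_k ∑_{ℓ>k} (-1)^{k+ℓ} b_ℓ δ_ℓ`. -/
theorem sudler_ostrowski_factorization (α : ℝ) (hα : Irrational α)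
    (a : ℕ → ℕ) (p : ℕ → ℤ) (q : ℕ → ℕ) (K : ℕ)
    (ha : ∀ k, 1 ≤ k → 1 ≤ a k) (hqpos : ∀ k, 0 < q k)
    (hq0 : q 0 = 1) (hq1 : q 1 = a 1)
    (hqrec : ∀ k, 2 ≤ k → q k = a k * q (k - 1) + q (k - 2))
    (δ : ℕ → ℝ) (hδ : ∀ k, δ k = (-1 : ℝ) ^ k * ((q k : ℝ) * α - (p k : ℝ)))
    (b : ℕ → ℕ)
    (hb0 : b 0 ≤ a 1 - 1)
    (hbk : ∀ k, 1 ≤ k → b k ≤ a (k + 1))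
    (hrule : ∀ k, 1 ≤ k → b k = a (k + 1) → b (k - 1) = 0)
    (N : ℕ) (hN : N = ∑ k ∈ Finset.range K, b k * q k) :
    sudler N α =
      ∏ k ∈ Finset.range K, ∏ j ∈ Finset.range (b k),
        sudlerPert (q k) k α
          ((j : ℝ) * (q k : ℝ) * δ k +
            (q k : ℝ) * ∑ ℓ ∈ Finset.Ioo k K, (-1 : ℝ) ^ (k + ℓ) * (b ℓ : ℝ) * δ ℓ) :=
  sudler_ostrowski_factorization_general α p q K δ hδ b N hN
end
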